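/- arXiv:2604.19195 — 2 statements merged into one kernel-verified Lean document; each statement's English description precedes it below -/
import Mathlib

section
/- Let a be a positive integer, b an integer coprime to a, b' an integer with b·b' ≡ 1 (mod a), and γ an integer. Then s(b, a; (γ + b/2)/a, 1/2) = s(b', a; (b'·γ + 1/2)/a, 0). -/
open scoped BigOperators

/-- The sawtooth function `((x))`: `x - ⌊x⌋ - 1/2` if `x` is not an integer, `0` otherwise. -/
noncomputable def sawtooth (x : ℝ) : ℝ :=
  if Int.fract x = 0 then 0 else Int.fract x - 1/2

/-- The Dedekind–Rademacher sum `s(b, a; x, y)`. -/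
noncomputable def drSum (b : ℤ) (a : ℕ) (x y : ℝ) : ℝ :=
  ∑ j ∈ Finset.range a, sawtooth (x + b * ((j : ℝ) + y) / a) * sawtooth (((j : ℝ) + y) / a)

lemma sawtooth_add_int (x : ℝ) (n : ℤ) : sawtooth (x + n) = sawtooth x := by
  unfold sawtooth; rw [Int.fract_add_intCast]

lemma sawtooth_neg (x : ℝ) : sawtooth (-x) = - sawtooth x := by
  unfold sawtooth
  by_cases h : Int.fract x = 0
  · simp [h, Int.fract_neg_eq_zero.mpr h]
  · have h' : Int.fract (-x) ≠ 0 := fun hh => h (Int.fract_neg_eq_zero.mp hh)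
    rw [if_neg h', if_neg h, Int.fract_neg h]; ring

lemma sawtooth_div_congr (a : ℕ) (ha : 0 < a) (x : ℝ) {N M : ℤ} (h : (a:ℤ) ∣ N - M) :
    sawtooth (((N:ℝ) + x)/a) = sawtooth (((M:ℝ) + x)/a) := by
  obtain ⟨t, ht⟩ := h
  have haR : (a:ℝ) ≠ 0 := Nat.cast_ne_zero.mpr ha.ne'
  have hN : (N:ℝ) = M + a * t := by
    have := congrArg (fun z : ℤ => (z:ℝ)) ht
    push_cast at this; linarith
  rw [hN, show ((M:ℝ) + a*t + x)/a = ((M:ℝ)+x)/a + t by field_simp; ring,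
    sawtooth_add_int]

theorem drSum_half_shift (a : ℕ) (ha : 0 < a) (b b' γ : ℤ)
    (hb : Int.gcd b a = 1) (hbb' : b * b' ≡ 1 [ZMOD (a : ℤ)]) :
    drSum b a (((γ : ℝ) + (b : ℝ) / 2) / a) (1/2)
      = drSum b' a (((b' : ℝ) * (γ : ℝ) + 1/2) / a) 0 := by
  have haR : (a:ℝ) ≠ 0 := Nat.cast_ne_zero.mpr ha.ne'
  have haZ : (0:ℤ) < (a:ℤ) := by exact_mod_cast ha
  obtain ⟨c, hc⟩ : (a:ℤ) ∣ b * b' - 1 := hbb'.symm.dvd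
  -- modular reduction helper: X % a = j when X ≡ j and 0 ≤ j < a
  have hred : ∀ (X j : ℤ), 0 ≤ j → j < a → (a:ℤ) ∣ X - j → X % a = j := by
    intro X j h0 h1 hd
    have h2 : X ≡ j [ZMOD (a:ℤ)] :=
      Int.modEq_of_dvd (by rw [show j - X = -(X - j) by ring]; exact dvd_neg.mpr hd)
    have h3 : X % a = j % a := h2
    rw [h3, Int.emod_eq_of_lt h0 h1]
  unfold drSum
  refine Finset.sum_nbij' (i := fun j => ((-b*(j+1) - γ) % a).toNat)
      (j := fun k => ((-b'*(γ+k) - 1) % a).toNat) ?_ ?_ ?_ ?_ ?_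
  · intro j _
    have h0 := Int.emod_nonneg (-b*(j+1) - γ) haZ.ne'
    have h1 := Int.emod_lt_of_pos (-b*(j+1) - γ) haZ
    simp only [Finset.mem_range]
    omega
  · intro k _
    have h0 := Int.emod_nonneg (-b'*(γ+k) - 1) haZ.ne'
    have h1 := Int.emod_lt_of_pos (-b'*(γ+k) - 1) haZ
    simp only [Finset.mem_range]
    omega
  · intro j hj
    simp only [Finset.mem_range] at hj
    beta_reduce
    set K : ℤ := (-b*(j+1) - γ) % a with hK
    have hK0 : 0 ≤ K := Int.emod_nonneg _ haZ.ne'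
    have hKcast : ((K.toNat : ℤ)) = K := Int.toNat_of_nonneg hK0
    have : (-b'*(γ + (K.toNat:ℤ)) - 1) % a = (j:ℤ) := by
      apply hred _ _ (by positivity) (by exact_mod_cast hj)
      refine ⟨c*((j:ℤ)+1) + b' * ((-b*((j:ℤ)+1) - γ) / a), ?_⟩
      rw [hKcast, hK, Int.emod_def]
      linear_combination ((j:ℤ)+1) * hc
    omega
  · intro k hk
    simp only [Finset.mem_range] at hk
    beta_reduce
    set K : ℤ := (-b'*(γ+k) - 1) % a with hK
    have hK0 : 0 ≤ K := Int.emod_nonneg _ haZ.ne'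
    have hKcast : ((K.toNat : ℤ)) = K := Int.toNat_of_nonneg hK0
    have : (-b*((K.toNat:ℤ)+1) - γ) % a = (k:ℤ) := by
      apply hred _ _ (by positivity) (by exact_mod_cast hk)
      refine ⟨c*(γ+(k:ℤ)) + b * ((-b'*(γ+(k:ℤ)) - 1) / a), ?_⟩
      rw [hKcast, hK, Int.emod_def]
      linear_combination ((γ:ℤ)+(k:ℤ)) * hc
    omega
  · intro j hj
    simp only [Finset.mem_range] at hj
    set K : ℤ := (-b*(j+1) - γ) % a with hK
    have hK0 : 0 ≤ K := Int.emod_nonneg _ haZ.ne'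
    have hKcast : (((K.toNat : ℕ) : ℝ)) = (K:ℝ) := by
      exact_mod_cast congrArg (fun z : ℤ => (z:ℝ)) (Int.toNat_of_nonneg hK0)
    -- rewrite LHS first argument
    have e1 : ((γ:ℝ) + (b:ℝ)/2)/a + (b:ℝ) * ((j:ℝ) + 1/2)/a
        = (((γ + b*((j:ℤ)+1) : ℤ) : ℝ) + 0)/a := by push_cast; field_simp; ring
    -- RHS second factor
    have e2 : ((b':ℝ) * (γ:ℝ) + 1/2)/a + (b':ℝ) * (((K.toNat:ℕ):ℝ) + 0)/a
        = (((b'*(γ+K) : ℤ) : ℝ) + 1/2)/a := by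
      rw [hKcast]; push_cast; field_simp; ring
    have f2 : sawtooth ((((K.toNat:ℕ):ℝ) + 0)/a)
        = - sawtooth ((((γ + b*((j:ℤ)+1) : ℤ):ℝ) + 0)/a) := by
      rw [hKcast, show ((K:ℝ) + 0)/a = (((K:ℤ):ℝ) + 0)/(a:ℝ) by norm_num]
      rw [sawtooth_div_congr a ha 0 (M := -(γ + b*((j:ℤ)+1)))
        ⟨-((-b*((j:ℤ)+1) - γ)/a), by rw [hK, Int.emod_def]; ring⟩]
      rw [show (((-(γ + b*((j:ℤ)+1)) : ℤ):ℝ) + 0)/a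
          = -((((γ + b*((j:ℤ)+1) : ℤ):ℝ) + 0)/a) by push_cast; ring]
      exact sawtooth_neg _
    have f1 : sawtooth ((((b'*(γ+K) : ℤ):ℝ) + 1/2)/a)
        = - sawtooth (((j:ℝ) + 1/2)/a) := by
      rw [sawtooth_div_congr a ha (1/2) (M := -((j:ℤ)+1))
        ⟨-(c*((j:ℤ)+1)) - b' * ((-b*((j:ℤ)+1) - γ)/a),
          by rw [hK, Int.emod_def]; linear_combination (-(j:ℤ)-1) * hc⟩]
      rw [show (((-((j:ℤ)+1) : ℤ):ℝ) + 1/2)/a = -(((j:ℝ) + 1/2)/a) by push_cast; ring]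
      exact sawtooth_neg _
    rw [e1, e2, f1, f2]
    ring
end

section
/- Let a be a positive integer, b an integer coprime to a, b' an integer with b·b' ≡ 1 (mod a), and n an integer. Then ∑_{r=0}^{a−1} {(n + r·b)/a} · (((r + 1/2)/a)) = s(b, a; (n − b/2)/a, 1/2) − (1/2)·(((−n·b' + 1/2)/a)). -/
open scoped BigOperators

/-!
Split `{x} = ((x)) + 1/2 - (1/2)·[x ∈ ℤ]`. The `((x))` part is the Dedekind–Rademacher sum,
the constant `1/2` contributes nothing because the midpoint values `(((r + 1/2)/a))` sum to zero,
and since `b` is invertible modulo `a`, `(n + r b)/a` is an integer for exactly one `r < a`,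
namely `r ≡ -n b' (mod a)`, which produces the correction term.
-/

open Finset

theorem Int.fract_intCast_div_natCast_eq_zero_iff {k : Type*} [Field k] [LinearOrder k]
    [IsOrderedRing k] [FloorRing k] {m : ℤ} {a : ℕ} (ha : a ≠ 0) :
    Int.fract ((m : k) / a) = 0 ↔ (a : ℤ) ∣ m := by
  rw [Int.fract_div_intCast_eq_div_intCast_mod, div_eq_zero_iff, Int.dvd_iff_emod_eq_zero]
  simp [ha]

theorem dvd_add_mul_iff_modEq {a : ℕ} {b b' n r : ℤ} (hbb' : b * b' ≡ 1 [ZMOD a]) :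
    (a : ℤ) ∣ n + r * b ↔ r ≡ -n * b' [ZMOD a] := by
  rw [← ZMod.intCast_eq_intCast_iff] at hbb' ⊢
  rw [← ZMod.intCast_zmod_eq_zero_iff_dvd]
  push_cast at hbb' ⊢
  constructor <;> intro h
  · linear_combination b' * h - r * hbb'
  · linear_combination b * h - n * hbb'

theorem sum_range_ite_intCast_modEq {M : Type*} [AddCommMonoid M] {a : ℕ} (ha : 0 < a)
    {g : ℤ → M} (hg : ∀ x y, x ≡ y [ZMOD a] → g x = g y) (m : ℤ) :
    ∑ r ∈ range a, (if (r : ℤ) ≡ m [ZMOD a] then g r else 0) = g m := by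
  have hm : 0 ≤ m % a := Int.emod_nonneg m (by omega)
  have hma : m % a < a := Int.emod_lt_of_pos m (by omega)
  have hiff : ∀ r ∈ range a, (r : ℤ) ≡ m [ZMOD a] ↔ r = (m % a).toNat := by
    intro r hr
    rw [Int.ModEq, Int.emod_eq_of_lt (by omega) (by simpa using hr)]
    omega
  rw [sum_congr rfl fun r hr => if_congr (hiff r hr) rfl rfl, sum_ite_eq',
    if_pos (mem_range.2 (by omega))]
  exact hg _ _ ((Int.toNat_of_nonneg hm).symm ▸ Int.mod_modEq m a)

theorem fract_eq_sawtooth_add_half_sub (x : ℝ) :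
    Int.fract x = sawtooth x + 1/2 - if Int.fract x = 0 then 1/2 else 0 := by
  unfold sawtooth
  split_ifs with h <;> simp [h]

theorem sawtooth_add_intCast (x : ℝ) (m : ℤ) : sawtooth (x + m) = sawtooth x := by
  simp only [sawtooth, Int.fract_add_intCast]

theorem sawtooth_intCast_add_div_congr {a : ℕ} {m m' : ℤ} (h : m ≡ m' [ZMOD a]) (y : ℝ) :
    sawtooth ((m + y) / a) = sawtooth ((m' + y) / a) := by
  rcases eq_or_ne a 0 with rfl | ha
  · simp
  obtain ⟨k, hk⟩ := h.dvd
  have : ((m' : ℝ) + y) / a = (m + y) / a + k := by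
    have hk' : (m' : ℝ) = m + a * k := by exact_mod_cast (sub_eq_iff_eq_add'.1 hk)
    rw [hk']
    field_simp
    ring
  rw [this, sawtooth_add_intCast]

theorem sawtooth_of_pos_of_lt_one {x : ℝ} (h0 : 0 < x) (h1 : x < 1) : sawtooth x = x - 1/2 := by
  rw [sawtooth, Int.fract_eq_self.2 ⟨h0.le, h1⟩, if_neg h0.ne']

theorem sum_range_add_half (a : ℕ) : ∑ r ∈ range a, ((r : ℝ) + 1/2) = a ^ 2 / 2 := by
  induction a with
  | zero => simp
  | succ k ih =>
    rw [sum_range_succ, ih]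
    push_cast
    ring

theorem sum_range_sawtooth_midpoint (a : ℕ) : ∑ r ∈ range a, sawtooth ((r + 1/2) / a) = 0 := by
  rcases a.eq_zero_or_pos with rfl | ha
  · simp
  have haR : (0 : ℝ) < a := by exact_mod_cast ha
  have hmid : ∀ r ∈ range a, sawtooth ((r + 1/2) / a) = ((r : ℝ) + 1/2) / a - 1/2 := by
    intro r hr
    have hr' : (r : ℝ) + 1 ≤ a := by exact_mod_cast mem_range.1 hr
    exact sawtooth_of_pos_of_lt_one (by positivity) ((div_lt_one haR).2 (by linarith))
  rw [sum_congr rfl hmid, sum_sub_distrib, ← sum_div, sum_range_add_half, sum_const,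
    card_range, nsmul_eq_mul]
  field_simp
  ring

theorem drSum_eq_sum_sawtooth_mul (b : ℤ) (a : ℕ) (t y : ℝ) :
    drSum b a ((t - b * y) / a) y
      = ∑ j ∈ range a, sawtooth ((t + j * b) / a) * sawtooth ((j + y) / a) := by
  refine sum_congr rfl fun j _ => ?_
  congr 2
  ring

theorem fract_sawtooth_sum_eq_drSum_general (a : ℕ) (ha : 0 < a) (b b' n : ℤ)
    (hbb' : b * b' ≡ 1 [ZMOD (a : ℤ)]) :
    ∑ r ∈ Finset.range a,
        Int.fract (((n : ℝ) + (r : ℝ) * b) / a) * sawtooth (((r : ℝ) + 1/2) / a)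
      = drSum b a (((n : ℝ) - (b : ℝ) / 2) / a) (1/2)
        - (1/2) * sawtooth ((-(n : ℝ) * (b' : ℝ) + 1/2) / a) := by
  set s : ℤ → ℝ := fun m => sawtooth ((m + 1/2) / a)
  have hfract_eq_zero : ∀ r : ℕ,
      Int.fract (((n : ℝ) + r * b) / a) = 0 ↔ (r : ℤ) ≡ -n * b' [ZMOD a] := by
    intro r
    rw [← dvd_add_mul_iff_modEq hbb', ← Int.fract_intCast_div_natCast_eq_zero_iff (k := ℝ) ha.ne']
    push_cast
    rfl
  calc _ = ∑ r ∈ range a, (sawtooth ((n + r * b) / a) * sawtooth ((r + 1/2) / a)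
          + 1/2 * s r - 1/2 * if (r : ℤ) ≡ -n * b' [ZMOD a] then s r else 0) := by
        refine sum_congr rfl fun r _ => ?_
        rw [fract_eq_sawtooth_add_half_sub]
        simp only [hfract_eq_zero, s, Int.cast_natCast]
        split_ifs <;> ring
    _ = drSum b a (((n : ℝ) - (b : ℝ) / 2) / a) (1/2)
        - (1/2) * sawtooth ((-(n : ℝ) * (b' : ℝ) + 1/2) / a) := by
        rw [sum_sub_distrib, sum_add_distrib, ← mul_sum, ← mul_sum,
          sum_range_ite_intCast_modEq ha (fun x y h => sawtooth_intCast_add_div_congr h _),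
          show (n : ℝ) - b / 2 = n - b * (1/2) by ring, drSum_eq_sum_sawtooth_mul]
        simp only [s, Int.cast_natCast, sum_range_sawtooth_midpoint]
        push_cast
        ring

theorem fract_sawtooth_sum_eq_drSum (a : ℕ) (ha : 0 < a) (b b' n : ℤ)
    (hb : Int.gcd b a = 1) (hbb' : b * b' ≡ 1 [ZMOD (a : ℤ)]) :
    ∑ r ∈ Finset.range a,
        Int.fract (((n : ℝ) + (r : ℝ) * b) / a) * sawtooth (((r : ℝ) + 1/2) / a)
      = drSum b a (((n : ℝ) - (b : ℝ) / 2) / a) (1/2)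
        - (1/2) * sawtooth ((-(n : ℝ) * (b' : ℝ) + 1/2) / a) :=
  fract_sawtooth_sum_eq_drSum_general a ha b b' n hbb'
end
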